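/- arXiv:0811.0149 — 5 statements merged into one kernel-verified Lean document; each statement's English description precedes it below -/
import Mathlib

section
/- Let P_1, ..., P_N be nonzero complex polynomials with strictly decreasing degrees, deg P_1 > deg P_2 > ... > deg P_N. If γ_1, ..., γ_N are continuous h-periodic functions ℝ → ℂ (h > 0) such that ∑_{j=1}^N γ_j(x) P_j(x) = 0 for all x ∈ ℝ, then γ_j = 0 identically for every j. -/
/-! Fix a point `x`. By periodicity the polynomial `∑ γ_k(x) P_k` vanishes on the infinite
progression `x + ℕ h`, so it is zero; polynomials of distinct degrees are linearly independent,
hence every `γ_k(x)` is zero. -/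

open Polynomial

theorem Polynomial.linearIndependent_of_injective_degree {R ι : Type*} [CommRing R] [IsDomain R]
    {p : ι → R[X]} (hp : ∀ i, p i ≠ 0) (hdeg : Function.Injective fun i ↦ (p i).degree) :
    LinearIndependent R p := by
  refine linearIndependent_iff'.mpr fun s g hsum i hi ↦ ?_
  have hdistinct : {i | i ∈ s ∧ g i • p i ≠ 0}.Pairwise
      (Function.onFun (· ≠ ·) (degree ∘ fun i ↦ g i • p i)) := by
    rintro a ⟨-, ha⟩ b ⟨-, hb⟩ hab
    simp only [Function.onFun, Function.comp_apply, smul_eq_C_mul,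
      degree_C_mul (left_ne_zero_of_smul ha), degree_C_mul (left_ne_zero_of_smul hb)]
    exact hdeg.ne hab
  have hsup := degree_sum_eq_of_disjoint _ s hdistinct
  rw [hsum, degree_zero, eq_comm, Finset.sup_eq_bot_iff] at hsup
  have hterm : g i • p i = 0 := degree_eq_bot.mp (hsup i hi)
  exact (smul_eq_zero.mp hterm).resolve_right (hp i)

theorem Polynomial.eq_zero_of_forall_isRoot_add_nat_mul {K : Type*} [Field K] [CharZero K]
    (p : K[X]) {a b : K} (hb : b ≠ 0) (hroot : ∀ n : ℕ, p.IsRoot (a + n * b)) : p = 0 := by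
  have hinj : Function.Injective fun n : ℕ ↦ a + n * b := fun m n hmn ↦ by
    simpa [hb] using hmn
  exact p.eq_zero_of_infinite_isRoot <|
    (Set.infinite_range_of_injective hinj).mono (Set.range_subset_iff.mpr hroot)

theorem stmt_0_general (N : ℕ) (P : Fin N → Polynomial ℂ)
    (hP : ∀ j, P j ≠ 0)
    (hdeg : ∀ j k : Fin N, j < k → (P k).degree < (P j).degree)
    (h : ℝ) (hh : 0 < h)
    (γ : Fin N → ℝ → ℂ)
    (hper : ∀ j, Function.Periodic (γ j) h)
    (hsum : ∀ x : ℝ, ∑ j, γ j x * (P j).eval (x : ℂ) = 0) :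
    ∀ j x, γ j x = 0 := by
  intro j x
  have hindep : LinearIndependent ℂ P :=
    linearIndependent_of_injective_degree hP (StrictAnti.injective fun j k ↦ hdeg j k)
  have hroot (n : ℕ) : (∑ k, γ k x • P k).IsRoot (x + n * h) := by
    have hshift (k : Fin N) : γ k (x + n * h) = γ k x := (hper k).nat_mul n x
    simpa [eval_finsetSum, hshift] using hsum (x + n * h)
  have hzero : ∑ k, γ k x • P k = 0 :=
    eq_zero_of_forall_isRoot_add_nat_mul _ (by exact_mod_cast hh.ne') hroot
  exact Fintype.linearIndependent_iff.mp hindep _ hzero j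

theorem stmt_0 (N : ℕ) (hN : 1 ≤ N) (P : Fin N → Polynomial ℂ)
    (hP : ∀ j, P j ≠ 0)
    (hdeg : ∀ j k : Fin N, j < k → (P k).degree < (P j).degree)
    (h : ℝ) (hh : 0 < h)
    (γ : Fin N → ℝ → ℂ)
    (hcont : ∀ j, Continuous (γ j))
    (hper : ∀ j, Function.Periodic (γ j) h)
    (hsum : ∀ x : ℝ, ∑ j, γ j x * (P j).eval (x : ℂ) = 0) :
    ∀ j x, γ j x = 0 :=
  stmt_0_general N P hP hdeg h hh γ hper hsum
end

section
/- With M_n(x) as above (the n × (n+1) matrix with (j,r) entry (i(x+jh))^r, j = 1..n, r = 0..n), let M_{n,r}(x) denote the n × n submatrix obtained by deleting column r. Then for each r = 0, 1, ..., n−1, the derivative in x of det M_{n,r}(x) satisfies (det M_{n,r})'(x) = i (r+1) det M_{n,r+1}(x). -/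
/-- `detM n h r x` is the determinant of the `n × n` submatrix of the `n × (n+1)`
matrix `M_n(x)` (with `(j,s)` entry `(i(x+jh))^s`, `j = 1..n`, `s = 0..n`)
obtained by deleting column `r`. -/
noncomputable def detM (n : ℕ) (h : ℝ) (r : Fin (n + 1)) (x : ℝ) : ℂ :=
  (Matrix.of fun j k : Fin n =>
    (Complex.I * ((x : ℂ) + ((j : ℕ) + 1) * (h : ℂ))) ^ ((r.succAbove k : Fin (n + 1)) : ℕ)).det

/-!
Write `M_{n,r}(x)` as the generalized Vandermonde matrix with nodes `z_j = i(x + jh)` and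
column exponents `e = (0, …, r-1, r+1, …, n)`. Every node has derivative `i`, so differentiating
column `k` of the determinant multiplies it by `i e_k` and lowers its exponent by one. For `k ≠ r`
this kills the column (`e_k = 0`) or makes it equal to the column with exponent `e_k - 1`; the
only surviving term comes from the exponent `r + 1`, and lowering it to `r` gives the exponents
of `M_{n,r+1}`.
-/

open Finset Matrix

section DetDeriv

variable {𝕜 𝔸 ι : Type*} [NontriviallyNormedField 𝕜] [NormedCommRing 𝔸] [NormedAlgebra 𝕜 𝔸]
  [Fintype ι] [DecidableEq ι]

theorem Matrix.prod_updateCol_perm (M : Matrix ι ι 𝔸) (k : ι) (c : ι → 𝔸) (σ : Equiv.Perm ι) :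
    ∏ i, M.updateCol k c (σ i) i = (∏ i ∈ univ.erase k, M (σ i) i) * c (σ k) := by
  rw [← prod_erase_mul univ _ (mem_univ k), updateCol_self]
  congr 1
  exact prod_congr rfl fun i hi => updateCol_ne (ne_of_mem_erase hi)

theorem hasDerivAt_det {A : 𝕜 → Matrix ι ι 𝔸} {A' : Matrix ι ι 𝔸} {x : 𝕜}
    (hA : ∀ i j, HasDerivAt (fun y => A y i j) (A' i j) x) :
    HasDerivAt (fun y => (A y).det) (∑ k, ((A x).updateCol k fun i => A' i k).det) x := by
  have hprod (σ : Equiv.Perm ι) : HasDerivAt (fun y => ∏ i, A y (σ i) i)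
      (∑ k, (∏ i ∈ univ.erase k, A x (σ i) i) * A' (σ k) k) x := by
    simpa only [smul_eq_mul] using HasDerivAt.fun_finsetProd fun i _ => hA (σ i) i
  simp only [det_apply, prod_updateCol_perm]
  rw [sum_comm]
  simp only [← smul_sum]
  exact HasDerivAt.fun_sum fun σ _ => (hprod σ).fun_const_smul (Equiv.Perm.sign σ)

end DetDeriv

namespace Matrix

section GenVandermonde

variable {R ι κ : Type*} [CommRing R]

def genVandermonde (z : ι → R) (e : κ → ℕ) : Matrix ι κ R :=
  of fun j k => z j ^ e k

theorem updateCol_genVandermonde [DecidableEq κ] (z : ι → R) (e : κ → ℕ) (k : κ) (a : ℕ) :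
    (genVandermonde z e).updateCol k (fun j => z j ^ a)
      = genVandermonde z (Function.update e k a) := by
  ext j l
  by_cases hl : l = k <;> simp [genVandermonde, Function.update_apply, hl]

variable [Fintype ι] [DecidableEq ι]

theorem det_genVandermonde_eq_zero (z : ι → R) {e : ι → ℕ} {i j : ι} (hij : i ≠ j)
    (he : e i = e j) : (genVandermonde z e).det = 0 :=
  det_zero_of_column_eq hij fun k => by simp [genVandermonde, he]

/-- For `k ≠ r`, lowering a nonzero exponent `e k` by one repeats the column of the `j` given by
`he`, so only the term `k = r` survives. -/
theorem sum_det_genVandermonde_update_eq_single (z : ι → R) {e : ι → ℕ} (r : ι)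
    (he : ∀ k ≠ r, e k ≠ 0 → ∃ j ≠ k, e j + 1 = e k) :
    ∑ k, (e k : R) * (genVandermonde z (Function.update e k (e k - 1))).det
      = e r * (genVandermonde z (Function.update e r (e r - 1))).det := by
  refine sum_eq_single r (fun k _ hkr => ?_) (by simp)
  by_cases hk : e k = 0
  · simp [hk]
  obtain ⟨j, hjk, hj⟩ := he k hkr hk
  rw [det_genVandermonde_eq_zero z hjk (by rw [Function.update_of_ne hjk, Function.update_self]; omega), mul_zero]

theorem hasDerivAt_det_genVandermonde {𝕜 𝔸 : Type*} [NontriviallyNormedField 𝕜]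
    [NormedCommRing 𝔸] [NormedAlgebra 𝕜 𝔸] {z : 𝕜 → ι → 𝔸} {c : 𝔸} {x : 𝕜}
    (hz : ∀ j, HasDerivAt (fun y => z y j) c x) (e : ι → ℕ) :
    HasDerivAt (fun y => (genVandermonde (z y) e).det)
      (c * ∑ k, (e k : 𝔸) * (genVandermonde (z x) (Function.update e k (e k - 1))).det) x := by
  have hcol (k : ι) : (fun j => (e k : 𝔸) * z x j ^ (e k - 1) * c)
      = ((e k : 𝔸) * c) • fun j => z x j ^ (e k - 1) := by
    ext j
    simp only [Pi.smul_apply, smul_eq_mul]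
    ring
  have hentry (j k : ι) : HasDerivAt (fun y => genVandermonde (z y) e j k)
      ((e k : 𝔸) * z x j ^ (e k - 1) * c) x :=
    (hz j).fun_pow (e k)
  convert hasDerivAt_det hentry using 1
  simp only [hcol, det_updateCol_smul, updateCol_genVandermonde, mul_sum]
  exact sum_congr rfl fun k _ => by ring

end GenVandermonde

end Matrix

namespace Fin

theorem val_succAbove_castSucc {n : ℕ} (r k : Fin n) :
    (r.castSucc.succAbove k : ℕ) = if k < r then (k : ℕ) else k + 1 := by
  split_ifs with hk
  · simp [succAbove_castSucc_of_lt _ _ hk]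
  · simp [succAbove_castSucc_of_le _ _ (not_lt.mp hk)]

theorem val_succAbove_succ {n : ℕ} (r k : Fin n) :
    (r.succ.succAbove k : ℕ) = if k ≤ r then (k : ℕ) else k + 1 := by
  split_ifs with hk
  · simp [succAbove_succ_of_le _ _ hk]
  · simp [succAbove_succ_of_lt _ _ (not_le.mp hk)]

theorem update_val_succAbove_castSucc {n : ℕ} (r : Fin n) :
    Function.update (fun k => (r.castSucc.succAbove k : ℕ)) r r
      = fun k => (r.succ.succAbove k : ℕ) := by
  ext k
  rcases eq_or_ne k r with rfl | hk
  · simp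
  · rw [Function.update_of_ne hk, val_succAbove_castSucc, val_succAbove_succ]
    have := val_ne_of_ne hk
    split_ifs <;> omega

theorem exists_val_succAbove_castSucc_add_one {n : ℕ} (r k : Fin n) (hk : k ≠ r)
    (h0 : (r.castSucc.succAbove k : ℕ) ≠ 0) :
    ∃ j ≠ k, (r.castSucc.succAbove j : ℕ) + 1 = r.castSucc.succAbove k := by
  have hkr := val_ne_of_ne hk
  rw [val_succAbove_castSucc] at h0
  have hk0 : 0 < (k : ℕ) := by split_ifs at h0 <;> omega
  refine ⟨⟨k - 1, by omega⟩, ne_of_val_ne (by simp only; omega), ?_⟩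
  simp only [val_succAbove_castSucc, lt_def]
  split_ifs <;> omega

end Fin

theorem detM_eq_det_genVandermonde (n : ℕ) (h : ℝ) (p : Fin (n + 1)) (x : ℝ) :
    detM n h p x = (genVandermonde (fun j : Fin n => Complex.I * ((x : ℂ) + ((j : ℕ) + 1) * h))
      fun k => (p.succAbove k : ℕ)).det :=
  rfl

theorem stmt_3_general (n : ℕ) (h : ℝ) (r : Fin n) (x : ℝ) :
    HasDerivAt (detM n h r.castSucc)
      (Complex.I * (((r : ℕ) : ℂ) + 1) * detM n h r.succ x) x := by
  have hnode (j : Fin n) :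
      HasDerivAt (fun y : ℝ => Complex.I * ((y : ℂ) + ((j : ℕ) + 1) * h)) Complex.I x := by
    simpa using ((hasDerivAt_id x).ofReal_comp.add_const (((j : ℕ) + 1) * (h : ℂ))).const_mul
      Complex.I
  have hdet := hasDerivAt_det_genVandermonde hnode fun k => (r.castSucc.succAbove k : ℕ)
  rw [sum_det_genVandermonde_update_eq_single _ r (Fin.exists_val_succAbove_castSucc_add_one r),
    Fin.succAbove_castSucc_self, Fin.val_succ, Nat.add_sub_cancel,
    Fin.update_val_succAbove_castSucc] at hdet
  refine hdet.congr_deriv ?_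
  rw [detM_eq_det_genVandermonde]
  push_cast
  ring

theorem stmt_3 (n : ℕ) (h : ℝ) (hh : 0 < h) (r : Fin n) (x : ℝ) :
    HasDerivAt (detM n h r.castSucc)
      (Complex.I * (((r : ℕ) : ℂ) + 1) * detM n h r.succ x) x :=
  stmt_3_general n h r x
end

section
/- With M_n(x) as above, the function x ↦ det M_{n,r}(x) is a polynomial in x of degree exactly n − r, for every r = 0, 1, ..., n. -/
/-!
Let `D_k(z)` be the minor of the Vandermonde matrix of `z = (z₁, …, zₙ)` with column `k` deleted.
Expanding the Vandermonde determinant of `(z₁, …, zₙ, X)` along its last row gives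
`∑ₖ ±D_k(z) Xᵏ`, while the product formula gives `V(z) ∏ (X - zⱼ)`; comparing coefficients of
`Xᵏ` (Vieta) yields `D_k(z) = V(z) e_{n-k}(z)`. For `zⱼ = i(x + jh)` the factor `V(z)` depends only
on the differences `i(j - j')h`, so it is a nonzero constant, and `e_{n-k}(z)` has degree `n - k`
in `x`, with leading coefficient `C(n, n-k) iⁿ⁻ᵏ ≠ 0`.
-/

open Polynomial Finset Matrix

theorem Fin.prod_Ioi_castSucc {M : Type*} [CommMonoid M] {n : ℕ} (a : Fin n)
    (f : Fin (n + 1) → M) :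
    ∏ j ∈ Ioi a.castSucc, f j = f (last n) * ∏ j ∈ Ioi a, f j.castSucc := by
  rw [Ioi_eq_Ioc, top_eq_last, ← Ioo_insert_right (castSucc_lt_last a), ← map_castSuccEmb_Ioi,
    prod_insert (by simp), prod_map]
  rfl

namespace Matrix

variable {R : Type*} [CommRing R] {n : ℕ}

theorem det_vandermonde_snoc_X (v : Fin n → R) :
    (vandermonde (Fin.snoc (fun a => C (v a)) X : Fin (n + 1) → R[X])).det =
      C (vandermonde v).det * ∏ a, (X - C (v a)) := by
  have hlast : Ioi (Fin.last n) = ∅ := by rw [← Fin.top_eq_last, Ioi_top]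
  rw [det_vandermonde, det_vandermonde, Fin.prod_univ_castSucc, hlast, prod_empty, mul_one]
  simp_rw [Fin.prod_Ioi_castSucc, Fin.snoc_castSucc, Fin.snoc_last, prod_mul_distrib, map_prod,
    map_sub, mul_comm]

theorem det_vandermonde_snoc_X_eq_sum (v : Fin n → R) :
    (vandermonde (Fin.snoc (fun a => C (v a)) X : Fin (n + 1) → R[X])).det =
      ∑ k : Fin (n + 1),
        C ((-1) ^ (n + k : ℕ) * (of fun i j : Fin n => v i ^ (k.succAbove j : ℕ)).det) *
          X ^ (k : ℕ) := by
  rw [det_succ_row _ (Fin.last n)]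
  refine sum_congr rfl fun k _ => ?_
  rw [map_mul, RingHom.map_det, mul_right_comm]
  congr 2
  · simp
  · congr 1
    ext i j
    simp
  · rw [vandermonde_apply, Fin.snoc_last]

theorem det_pow_succAbove (v : Fin n → R) (k : Fin (n + 1)) :
    (of fun i j : Fin n => v i ^ (k.succAbove j : ℕ)).det =
      (vandermonde v).det * (univ.val.map v).esymm (n - k) := by
  have hcoeff := congrArg (coeff · k)
    ((det_vandermonde_snoc_X_eq_sum v).symm.trans (det_vandermonde_snoc_X v))
  have hk : (k : ℕ) ≤ Multiset.card (univ.val.map v) := by simpa using k.is_le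
  rw [show ∏ a, (X - C (v a)) = ((univ.val.map v).map fun t => X - C t).prod by
    rw [Multiset.map_map]; rfl] at hcoeff
  simp only [finsetSum_coeff, coeff_C_mul, coeff_X_pow, mul_ite, mul_one, mul_zero, Fin.val_inj,
    sum_ite_eq, mem_univ, if_true, Multiset.prod_X_sub_C_coeff _ hk, Multiset.card_map, card_val,
    card_univ, Fintype.card_fin] at hcoeff
  have hsign : (-1 : R) ^ (n + k : ℕ) = (-1) ^ (n - k) := by
    rw [show n + (k : ℕ) = n - k + 2 * k by omega, pow_add, pow_mul, neg_one_sq, one_pow, mul_one]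
  rw [hsign, mul_left_comm] at hcoeff
  exact (isUnit_neg_one.pow _).mul_left_cancel hcoeff

end Matrix

namespace Polynomial

theorem degree_esymm_map_of_natDegree_le_one {R ι : Type*} [CommRing R] [IsDomain R] [CharZero R]
    (s : Finset ι) (f : ι → R[X]) {c : R} (hc : c ≠ 0) (hdeg : ∀ i ∈ s, (f i).natDegree ≤ 1)
    (hlead : ∀ i ∈ s, (f i).coeff 1 = c) {k : ℕ} (hk : k ≤ #s) :
    ((s.val.map f).esymm k).degree = k := by
  have hsub : ∀ t ∈ s.powersetCard k, t ⊆ s ∧ #t = k := fun t ht => mem_powersetCard.mp ht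
  have hprod_deg : ∀ t ∈ s.powersetCard k, (∏ i ∈ t, f i).natDegree ≤ k := fun t ht => by
    obtain ⟨hts, rfl⟩ := hsub t ht
    calc (∏ i ∈ t, f i).natDegree ≤ ∑ i ∈ t, (f i).natDegree := natDegree_prod_le t f
      _ ≤ ∑ _i ∈ t, 1 := sum_le_sum fun i hi => hdeg i (hts hi)
      _ = #t := by simp
  have hprod_coeff : ∀ t ∈ s.powersetCard k, (∏ i ∈ t, f i).coeff k = c ^ k := fun t ht => by
    obtain ⟨hts, rfl⟩ := hsub t ht
    rw [← mul_one #t, coeff_prod_of_natDegree_le t f 1 fun i hi => hdeg i (hts hi),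
      prod_congr rfl fun i hi => hlead i (hts hi), prod_const, mul_one]
  rw [esymm_map_val]
  refine degree_eq_of_le_of_coeff_ne_zero ?_ ?_
  · exact (degree_sum_le _ _).trans <| Finset.sup_le fun t ht =>
      degree_le_of_natDegree_le (hprod_deg t ht)
  · rw [finsetSum_coeff, sum_congr rfl hprod_coeff, sum_const, card_powersetCard, nsmul_eq_mul]
    exact mul_ne_zero (Nat.cast_ne_zero.mpr (Nat.choose_pos hk).ne') (pow_ne_zero k hc)

end Polynomial

noncomputable def nodePoly (h : ℝ) {n : ℕ} (j : Fin n) : ℂ[X] :=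
  C Complex.I * (X + C (((j : ℕ) + 1) * (h : ℂ)))

theorem detM_eq_eval (n : ℕ) (h : ℝ) (r : Fin (n + 1)) (x : ℝ) :
    detM n h r x =
      (of fun i j : Fin n => nodePoly h i ^ (r.succAbove j : ℕ)).det.eval (x : ℂ) := by
  rw [detM, ← coe_evalRingHom, RingHom.map_det]
  congr 1
  ext i j
  simp [nodePoly]

theorem degree_det_vandermonde_nodePoly {h : ℝ} (hh : h ≠ 0) (n : ℕ) :
    (vandermonde (nodePoly h : Fin n → ℂ[X])).det.degree = 0 := by
  set w : Fin n → ℂ := fun j => Complex.I * (((j : ℕ) + 1) * h)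
  have hw : Function.Injective w := fun a b hab => by
    simpa [w, hh, Complex.I_ne_zero, Fin.val_inj] using hab
  have hnode : nodePoly h = fun j => C (w j) + C Complex.I * X := by
    funext j
    simp only [nodePoly, w, map_mul]
    ring
  have hmap : vandermonde (fun j => C (w j)) = (vandermonde w).map C := by
    ext i j
    simp [vandermonde_apply]
  rw [hnode, det_vandermonde_add (fun j => C (w j)), hmap, ← RingHom.mapMatrix_apply,
    ← RingHom.map_det, degree_C (det_vandermonde_ne_zero_iff.mpr hw)]

theorem natDegree_nodePoly_le (h : ℝ) {n : ℕ} (j : Fin n) : (nodePoly h j).natDegree ≤ 1 := by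
  unfold nodePoly
  compute_degree

theorem coeff_nodePoly_one (h : ℝ) {n : ℕ} (j : Fin n) : (nodePoly h j).coeff 1 = Complex.I := by
  rw [nodePoly, coeff_C_mul, coeff_add, coeff_X_one, coeff_C_of_ne_zero one_ne_zero, add_zero,
    mul_one]

theorem stmt_4 (n : ℕ) (h : ℝ) (hh : 0 < h) (r : Fin (n + 1)) :
    ∃ p : Polynomial ℂ, p.degree = ((n - (r : ℕ) : ℕ) : WithBot ℕ) ∧
      ∀ x : ℝ, detM n h r x = p.eval (x : ℂ) := by
  refine ⟨(vandermonde (nodePoly h)).det * (univ.val.map (nodePoly h)).esymm (n - r), ?_,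
    fun x => by rw [detM_eq_eval, det_pow_succAbove]⟩
  rw [degree_mul, degree_det_vandermonde_nodePoly hh.ne', zero_add,
    degree_esymm_map_of_natDegree_le_one _ _ Complex.I_ne_zero
      (fun j _ => natDegree_nodePoly_le h j) (fun j _ => coeff_nodePoly_one h j) (by simp)]
end

section
/- Let N ≥ 1 and let W_1, ..., W_N : ℝ → ℂ be polynomials with strictly decreasing degrees deg W_1 > deg W_2 > ... > deg W_N, all nonzero. Let ℓ_1 < ℓ_2 < ... < ℓ_M be distinct integers and let h > 0. If p_1, ..., p_N are trigonometric polynomials of the form p_j(t) = ∑_{m=1}^M x_{j,m} e^{−2πi ℓ_m t / h} with complex coefficients, and ∑_{j=1}^N p_j(t) W_j(t) = 0 for all t in some nonempty open interval K ⊆ ℝ, then all p_j are identically zero. -/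
/-!
The function `F z = ∑ⱼ pⱼ(z) Wⱼ(z)` is entire, so vanishing on a real interval forces `F = 0`
on all of `ℂ`. Fix `t`; since every `pⱼ` is `h`-periodic, the polynomial `∑ⱼ pⱼ(t) Wⱼ` vanishes
at the infinitely many points `t + n h`, `n ∈ ℕ`, hence is zero. Polynomials of pairwise distinct
degrees are linearly independent, so every `pⱼ(t)` vanishes.
-/

open Polynomial Complex Filter Topology Function

namespace Polynomial

variable {R : Type*} [CommRing R] [IsDomain R]

theorem linearIndependent_of_degree_injective {ι : Type*} {p : ι → R[X]} (hp : ∀ i, p i ≠ 0)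
    (hdeg : Injective fun i ↦ (p i).degree) : LinearIndependent R p := by
  refine linearIndependent_iff'.2 fun s g hsum i hi ↦ ?_
  have hdeg_smul : ∀ j, g j • p j ≠ 0 → (g j • p j).degree = (p j).degree := fun j hj ↦ by
    rw [smul_eq_C_mul, degree_C_mul (smul_ne_zero_iff.1 hj).1]
  have hsup : (s.sup fun j ↦ (g j • p j).degree) = ⊥ := by
    rw [← degree_sum_eq_of_disjoint _ s fun j hj k hk hjk ↦ ?_, hsum, degree_zero]
    simpa [hdeg_smul j hj.2, hdeg_smul k hk.2] using hdeg.ne hjk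
  have hi_zero : g i • p i = 0 :=
    degree_eq_bot.1 (eq_bot_mono (Finset.le_sup (f := fun j ↦ (g j • p j).degree) hi) hsup)
  exact (smul_eq_zero.1 hi_zero).resolve_right (hp i)

theorem eq_zero_of_forall_eval_add_nat_mul_eq_zero [CharZero R] {p : R[X]} {t d : R} (hd : d ≠ 0)
    (hroot : ∀ n : ℕ, p.eval (t + n * d) = 0) : p = 0 :=
  eq_zero_of_infinite_isRoot p <| Set.infinite_of_injective_forall_mem
    (fun _ _ hmn ↦ Nat.cast_injective (mul_right_cancel₀ hd (add_left_cancel hmn))) hroot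

end Polynomial

theorem Differentiable.eq_zero_of_forall_Ioo_eq_zero {E : Type*} [NormedAddCommGroup E]
    [NormedSpace ℂ E] [CompleteSpace E] {f : ℂ → E} (hf : Differentiable ℂ f) {a b : ℝ} (hab : a < b)
    (hzero : ∀ t ∈ Set.Ioo a b, f t = 0) : f = 0 := by
  obtain ⟨x, hx⟩ := Set.nonempty_Ioo.2 hab
  have hreal : ∀ᶠ t : ℝ in 𝓝[≠] x, f t = 0 :=
    eventually_nhdsWithin_of_eventually_nhds (eventually_of_mem (Ioo_mem_nhds hx.1 hx.2) hzero)
  have hofReal : Tendsto ((↑) : ℝ → ℂ) (𝓝[≠] x) (𝓝[≠] (x : ℂ)) :=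
    continuous_ofReal.continuousWithinAt.tendsto_nhdsWithin fun _ ↦ by simp
  exact AnalyticOnNhd.eq_of_frequently_eq (fun z _ ↦ hf.analyticAt z) analyticOnNhd_const
    (hofReal.frequently hreal.frequently)

noncomputable def trigPoly {ι : Type*} [Fintype ι] (h : ℂ) (ℓ : ι → ℤ) (c : ι → ℂ) (z : ℂ) : ℂ :=
  ∑ m, c m * exp (-2 * Real.pi * I * (ℓ m : ℂ) * z / h)

namespace trigPoly

variable {ι : Type*} [Fintype ι] (ℓ : ι → ℤ) (c : ι → ℂ)

theorem differentiable (h : ℂ) : Differentiable ℂ (trigPoly h ℓ c) := by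
  unfold trigPoly
  fun_prop

theorem periodic {h : ℂ} (hh : h ≠ 0) : Periodic (trigPoly h ℓ c) h := fun z ↦ by
  refine Finset.sum_congr rfl fun m _ ↦ congrArg (c m * ·) ?_
  have harg : -2 * Real.pi * I * ℓ m * (z + h) / h
      = -2 * Real.pi * I * ℓ m * z / h + ((-ℓ m : ℤ) : ℂ) * (2 * Real.pi * I) := by
    field_simp
    push_cast
    ring
  rw [harg, exp_add, exp_int_mul_two_pi_mul_I, mul_one]

end trigPoly

theorem stmt_5_general (N : ℕ) (W : Fin N → Polynomial ℂ)
    (hW : ∀ j, W j ≠ 0)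
    (hdeg : ∀ j k : Fin N, j < k → (W k).degree < (W j).degree)
    (M : ℕ) (ℓ : Fin M → ℤ)
    (h : ℝ) (hh : 0 < h)
    (c : Fin N → Fin M → ℂ)
    (a b : ℝ) (hab : a < b)
    (hvanish : ∀ t ∈ Set.Ioo a b,
      ∑ j, (∑ m, c j m * Complex.exp (-2 * Real.pi * Complex.I * (ℓ m : ℂ) * (t : ℂ) / (h : ℂ)))
          * (W j).eval (t : ℂ) = 0) :
    ∀ j, ∀ t : ℝ,
      ∑ m, c j m * Complex.exp (-2 * Real.pi * Complex.I * (ℓ m : ℂ) * (t : ℂ) / (h : ℂ)) = 0 := by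
  intro j t
  have hh' : (h : ℂ) ≠ 0 := ofReal_ne_zero.2 hh.ne'
  have hF : (fun z ↦ ∑ j, trigPoly h ℓ (c j) z * (W j).eval z) = 0 :=
    (Differentiable.fun_sum fun j _ ↦ (trigPoly.differentiable _ _ _).mul (W j).differentiable)
      |>.eq_zero_of_forall_Ioo_eq_zero hab hvanish
  have hQ : ∑ j, trigPoly h ℓ (c j) t • W j = 0 := by
    refine eq_zero_of_forall_eval_add_nat_mul_eq_zero (t := t) hh' fun n ↦ ?_
    simp only [eval_finsetSum, eval_smul, smul_eq_mul]
    simp_rw [← (trigPoly.periodic ℓ _ hh').nat_mul n t]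
    exact congrFun hF _
  have hindep : LinearIndependent ℂ W :=
    linearIndependent_of_degree_injective hW (StrictAnti.injective hdeg)
  exact Fintype.linearIndependent_iff.1 hindep _ hQ j

theorem stmt_5 (N : ℕ) (hN : 1 ≤ N) (W : Fin N → Polynomial ℂ)
    (hW : ∀ j, W j ≠ 0)
    (hdeg : ∀ j k : Fin N, j < k → (W k).degree < (W j).degree)
    (M : ℕ) (ℓ : Fin M → ℤ) (hℓ : StrictMono ℓ)
    (h : ℝ) (hh : 0 < h)
    (c : Fin N → Fin M → ℂ)
    (a b : ℝ) (hab : a < b)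
    (hvanish : ∀ t ∈ Set.Ioo a b,
      ∑ j, (∑ m, c j m * Complex.exp (-2 * Real.pi * Complex.I * (ℓ m : ℂ) * (t : ℂ) / (h : ℂ)))
          * (W j).eval (t : ℂ) = 0) :
    ∀ j, ∀ t : ℝ,
      ∑ m, c j m * Complex.exp (-2 * Real.pi * Complex.I * (ℓ m : ℂ) * (t : ℂ) / (h : ℂ)) = 0 :=
  stmt_5_general N W hW hdeg M ℓ h hh c a b hab hvanish
end

section
/- Let n ≥ 1 and h > 0. Consider the n × (n+1) matrix M(x) with entries M(x)_{j,r} = (i(x + jh))^r, j = 1..n, r = 0..n. Let W(x) ∈ ℂ^{n+1} be the generalized cross product of the rows of M(x), so that W_k(x) is (up to sign) the minor of M(x) obtained by deleting column k−1. Then the components W_1, ..., W_{n+1} are linearly independent over the ring of trigonometric polynomials: if p_1, ..., p_{n+1} are finite complex linear combinations of functions e^{−2πi ℓ t / h} (ℓ ∈ ℤ) with ∑_k p_k(t) W_k(t) = 0 for all t ∈ ℝ, then all p_k = 0. -/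
/-- The generalized cross product of the rows of the `n × (n+1)` matrix `M(x)`
with `(j,r)` entry `(i(x+jh))^r`: its `k`-th component is, up to sign, the minor
of `M(x)` obtained by deleting column `k`. -/
noncomputable def Wcross (n : ℕ) (h : ℝ) (k : Fin (n + 1)) (x : ℝ) : ℂ :=
  (-1 : ℂ) ^ ((k : ℕ) + 1) *
    (Matrix.of fun i j : Fin n =>
      (Complex.I * ((x : ℂ) + ((i : ℕ) + 1) * (h : ℂ))) ^ ((k.succAbove j : Fin (n + 1)) : ℕ)).det

open Polynomial Matrix

/-! The signed maximal minors of the `n × (n+1)` Vandermonde matrix with distinct nodes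
`y₁, …, yₙ` are, up to the common nonzero factor `(-1)ⁿ det V(y)`, the coefficients of
`∏ⱼ (X - yⱼ)`: Cramer's rule applied to this coefficient vector, which the Vandermonde rows
annihilate. For the nodes `i(x + jh)` this polynomial is the Taylor shift by `-ix` of a fixed
polynomial `Q` of degree `n`, so `W_k(x)` is a nonzero multiple of `(D^k Q)(-ix)`, with `D^k` the
`k`-th Hasse derivative; these have degrees `n - k` and are linearly independent.
Fix `t`: by periodicity `∑ₖ pₖ(t) W_k(t + Nh) = 0` for every `N`, so the polynomial
`∑ₖ pₖ(t) D^k Q` has infinitely many roots, hence vanishes, and all `pₖ(t) = 0`. -/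

namespace Polynomial

theorem linearIndependent_of_natDegree_injective {K ι : Type*} [Field K] {f : ι → K[X]}
    (hf : ∀ i, f i ≠ 0) (hdeg : Function.Injective fun i => (f i).natDegree) :
    LinearIndependent K f := by
  refine linearIndependent_iff'.mpr fun s g hsum i hi => by_contra fun hgi => ?_
  have hpair : Set.Pairwise {j | j ∈ s ∧ g j • f j ≠ 0}
      (fun j j' => degree (g j • f j) ≠ degree (g j' • f j')) := by
    intro j ⟨_, hj⟩ j' ⟨_, hj'⟩ hjj'
    simp only [smul_eq_C_mul, degree_C_mul (left_ne_zero_of_smul hj),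
      degree_C_mul (left_ne_zero_of_smul hj'), degree_eq_natDegree (hf j),
      degree_eq_natDegree (hf j'), ne_eq, Nat.cast_inj]
    exact hdeg.ne hjj'
  have hsup := degree_sum_eq_of_disjoint _ s hpair
  rw [hsum, degree_zero, eq_comm, Finset.sup_eq_bot_iff] at hsup
  exact smul_ne_zero hgi (hf i) (degree_eq_bot.mp (hsup i hi))

theorem linearIndependent_hasseDeriv {K : Type*} [Field K] [CharZero K] {p : K[X]} {n : ℕ}
    (hp : p.degree = n) : LinearIndependent K fun k : Fin (n + 1) => hasseDeriv k p := by
  refine linearIndependent_of_natDegree_injective (fun k hk => ?_) (fun k k' hkk' => ?_)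
  · have hk_le : (k : ℕ) ≤ n := Nat.lt_succ_iff.mp k.isLt
    have hcoeff := congr_arg (coeff · (n - k)) hk
    simp only [hasseDeriv_coeff, Nat.sub_add_cancel hk_le, coeff_zero] at hcoeff
    exact mul_ne_zero (Nat.cast_ne_zero.mpr (Nat.choose_pos hk_le).ne')
      (coeff_ne_zero_of_eq_degree hp) hcoeff
  · simp only [natDegree_hasseDeriv, natDegree_eq_of_degree_eq_some hp] at hkk'
    exact Fin.ext (by omega)

theorem prod_X_sub_C_add_eq_taylor {R ι : Type*} [CommRing R] (s : Finset ι) (y : ι → R)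
    (r : R) : ∏ j ∈ s, (X - C (y j + r)) = taylor (-r) (∏ j ∈ s, (X - C (y j))) := by
  rw [← taylorAlgHom_apply, map_prod]
  refine Finset.prod_congr rfl fun j _ => ?_
  simp only [taylorAlgHom_apply, map_sub, taylor_X, taylor_C, C_add, C_neg]
  ring

end Polynomial

namespace Matrix

variable {R : Type*} [CommRing R] {n : ℕ}

def consVandermonde (a : Fin (n + 1) → R) (y : Fin n → R) :
    Matrix (Fin (n + 1)) (Fin (n + 1)) R :=
  of (Fin.cons a fun j r => y j ^ (r : ℕ))

variable [Nontrivial R]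

theorem consVandermonde_mulVec_coeff (a : Fin (n + 1) → R) (y : Fin n → R) :
    consVandermonde a y *ᵥ (fun r => (∏ j, (X - C (y j))).coeff r) =
      Pi.single 0 (∑ r, a r * (∏ j, (X - C (y j))).coeff r) := by
  set P := ∏ j, (X - C (y j))
  ext i
  induction i using Fin.cases with
  | zero => simp [consVandermonde, mulVec, dotProduct]
  | succ j =>
    have hP : P.natDegree < n + 1 := by simp [P]
    have hroot : P.eval (y j) = 0 := by
      simp only [P, eval_prod, eval_sub, eval_X, eval_C]
      exact Finset.prod_eq_zero (Finset.mem_univ j) (sub_self _)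
    rw [Pi.single_eq_of_ne (Fin.succ_ne_zero j), ← hroot, eval_eq_sum_range' hP,
      ← Fin.sum_univ_eq_sum_range (fun r => P.coeff r * y j ^ r)]
    simp [consVandermonde, mulVec, dotProduct, mul_comm]

theorem det_consVandermonde (a : Fin (n + 1) → R) (y : Fin n → R) :
    (consVandermonde a y).det =
      (-1) ^ n * (∑ r, a r * (∏ j, (X - C (y j))).coeff r) * (vandermonde y).det := by
  set A := consVandermonde a y
  set q : Fin (n + 1) → R := fun r => (∏ j, (X - C (y j))).coeff r
  have hq : q (Fin.last n) = 1 := by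
    have hmonic := (monic_prod_X_sub_C y Finset.univ).coeff_natDegree
    rwa [natDegree_finsetProd_X_sub_C_eq_card, Finset.card_univ, Fintype.card_fin] at hmonic
  have hcramer : cramer A (A *ᵥ q) = A.det • q := by
    rw [cramer_eq_adjugate_mulVec, mulVec_mulVec, adjugate_mul, smul_mulVec, one_mulVec]
  have hvandermonde (b : Fin (n + 1) → R) :
      (A.updateCol (Fin.last n) b).submatrix Fin.succ Fin.castSucc = vandermonde y := by
    ext i j
    simp [A, consVandermonde, vandermonde, (Fin.castSucc_lt_last j).ne]
  have hlast := congr_fun hcramer (Fin.last n)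
  rw [consVandermonde_mulVec_coeff, cramer_apply, Pi.smul_apply, hq, smul_eq_mul, mul_one,
    det_succ_column _ (Fin.last n), Fin.sum_univ_succ] at hlast
  simp [← hlast, Fin.succ_ne_zero, hvandermonde]

theorem neg_one_pow_mul_det_vandermonde_minor (y : Fin n → R) (k : Fin (n + 1)) :
    (-1) ^ (k : ℕ) * (of fun i j : Fin n => y i ^ (k.succAbove j : ℕ)).det =
      (-1) ^ n * (∏ j, (X - C (y j))).coeff k * (vandermonde y).det := by
  have hk := det_consVandermonde (Pi.single k 1) y
  rw [det_succ_row_zero, Finset.sum_eq_single k (fun r _ hr => by simp [consVandermonde, hr])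
    (by simp)] at hk
  have hminor : (consVandermonde (Pi.single k 1) y).submatrix Fin.succ k.succAbove =
      of fun i j => y i ^ (k.succAbove j : ℕ) := by
    ext i j
    simp [consVandermonde]
  rw [hminor] at hk
  simpa [consVandermonde, Pi.single_apply] using hk

end Matrix

noncomputable def Wnodes (n : ℕ) (h : ℝ) (x : ℂ) (j : Fin n) : ℂ :=
  Complex.I * (x + ((j : ℕ) + 1) * h)

theorem Wnodes_injective {n : ℕ} {h : ℝ} (hh : h ≠ 0) (x : ℂ) :
    Function.Injective (Wnodes n h x) := by
  intro j j' hjj'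
  simp only [Wnodes, mul_eq_mul_left_iff, Complex.I_ne_zero, or_false, add_right_inj,
    mul_eq_mul_right_iff, Complex.ofReal_eq_zero, hh] at hjj'
  have hval : (j : ℕ) + 1 = j' + 1 := by exact_mod_cast hjj'
  exact Fin.ext (by omega)

theorem Wcross_eq (n : ℕ) (h : ℝ) (k : Fin (n + 1)) (x : ℝ) :
    Wcross n h k x = (-1) ^ (n + 1) * (vandermonde (Wnodes n h x)).det *
      (hasseDeriv k (∏ j, (X - C (Wnodes n h 0 j)))).eval (-(Complex.I * x)) := by
  have htaylor : ∏ j, (X - C (Wnodes n h x j)) =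
      taylor (-(Complex.I * x)) (∏ j, (X - C (Wnodes n h 0 j))) := by
    rw [← prod_X_sub_C_add_eq_taylor]
    congr! 3 with j
    simp only [Wnodes]
    ring
  have hminor := neg_one_pow_mul_det_vandermonde_minor (Wnodes n h x) k
  rw [htaylor, taylor_coeff] at hminor
  change (-1) ^ ((k : ℕ) + 1) *
    (of fun i j : Fin n => Wnodes n h x i ^ (k.succAbove j : ℕ)).det = _
  linear_combination -hminor

theorem sum_mul_exp_periodic (S : Finset ℤ) (c : ℤ → ℂ) {h : ℝ} (hh : h ≠ 0) :
    Function.Periodic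
      (fun t : ℝ => ∑ ℓ ∈ S, c ℓ * Complex.exp (-2 * Real.pi * Complex.I * ℓ * t / h)) h := by
  have hh' : (h : ℂ) ≠ 0 := by exact_mod_cast hh
  intro t
  refine Finset.sum_congr rfl fun ℓ _ => ?_
  have harg : -2 * Real.pi * Complex.I * ℓ * ↑(t + h) / h =
      -2 * Real.pi * Complex.I * ℓ * t / h + (-ℓ : ℤ) * (2 * Real.pi * Complex.I) := by
    push_cast
    field_simp
    ring
  rw [harg, Complex.exp_add, Complex.exp_int_mul_two_pi_mul_I, mul_one]

theorem stmt_16_general (n : ℕ) (h : ℝ) (hh : 0 < h)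
    (S : Finset ℤ) (c : Fin (n + 1) → ℤ → ℂ)
    (hvanish : ∀ t : ℝ,
      ∑ k : Fin (n + 1),
        (∑ ℓ ∈ S, c k ℓ * Complex.exp (-2 * Real.pi * Complex.I * (ℓ : ℂ) * (t : ℂ) / (h : ℂ)))
          * Wcross n h k t = 0) :
    ∀ k : Fin (n + 1), ∀ t : ℝ,
      ∑ ℓ ∈ S, c k ℓ * Complex.exp (-2 * Real.pi * Complex.I * (ℓ : ℂ) * (t : ℂ) / (h : ℂ)) = 0 := by
  intro k₀ t
  set a : Fin (n + 1) → ℂ := fun k =>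
    ∑ ℓ ∈ S, c k ℓ * Complex.exp (-2 * Real.pi * Complex.I * ℓ * t / h)
  set Q : ℂ[X] := ∏ j, (X - C (Wnodes n h 0 j))
  have hroot : ∀ N : ℕ, (∑ k, a k • hasseDeriv k Q).IsRoot (-(Complex.I * ↑(t + N * h))) := by
    intro N
    have hV := det_vandermonde_ne_zero_iff.mpr (Wnodes_injective (n := n) hh.ne' ↑(t + N * h))
    have hN := hvanish (t + N * h)
    simp only [fun k => (sum_mul_exp_periodic S (c k) hh.ne').nat_mul N t, Wcross_eq] at hN
    have hfactor : (-1) ^ (n + 1) * (vandermonde (Wnodes n h ↑(t + N * h))).det *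
        (∑ k, a k • hasseDeriv k Q).eval (-(Complex.I * ↑(t + N * h))) = 0 := by
      rw [← hN, eval_finsetSum, Finset.mul_sum]
      simp only [eval_smul, smul_eq_mul]
      exact Finset.sum_congr rfl fun k _ => by ring
    exact (mul_eq_zero.mp hfactor).resolve_left (mul_ne_zero (by simp) hV)
  have hinj : Function.Injective fun N : ℕ => -(Complex.I * ↑(t + N * h)) := by
    intro N N' hNN'
    simpa [hh.ne'] using hNN'
  have hR := eq_zero_of_infinite_isRoot _ (Set.infinite_of_injective_forall_mem hinj hroot)
  have hQ : Q.degree = n := by simp [Q, degree_eq_natDegree (monic_prod_X_sub_C _ _).ne_zero]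
  exact Fintype.linearIndependent_iff.mp (linearIndependent_hasseDeriv hQ) a hR k₀

theorem stmt_16 (n : ℕ) (hn : 1 ≤ n) (h : ℝ) (hh : 0 < h)
    (S : Finset ℤ) (c : Fin (n + 1) → ℤ → ℂ)
    (hvanish : ∀ t : ℝ,
      ∑ k : Fin (n + 1),
        (∑ ℓ ∈ S, c k ℓ * Complex.exp (-2 * Real.pi * Complex.I * (ℓ : ℂ) * (t : ℂ) / (h : ℂ)))
          * Wcross n h k t = 0) :
    ∀ k : Fin (n + 1), ∀ t : ℝ,
      ∑ ℓ ∈ S, c k ℓ * Complex.exp (-2 * Real.pi * Complex.I * (ℓ : ℂ) * (t : ℂ) / (h : ℂ)) = 0 :=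
  stmt_16_general n h hh S c hvanish
end
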